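/- Let R be a commutative ring, V a type with degree function d : V → ℤ, A the free associative unital R-algebra on V graded so that v ∈ V has degree d(v), with a degree −1 square-zero signed-Leibniz differential ∂, and let S_i(A) be the stabilization, the free algebra on V and two new generators e₁ (degree i), e₂ (degree i−1) with differential ∂′ extending ∂ and ∂′e₁ = e₂, ∂′e₂ = 0. Each monomial w in the generators of S_i(A) either contains no occurrence of e₁, e₂ (so w ∈ A), or factors uniquely as w = a·e_j·b where a ∈ A is a monomial containing no e₁, e₂ and j ∈ {1,2}. Define the R-linear map H : S_i(A) → S_i(A) on monomials by H(w) = 0 if w ∈ A, H(a e₁ b) = 0, and H(a e₂ b) = (−1)^{|a|+1} a e₁ b. Let τ : S_i(A) → A be the algebra projection fixing V and sending e₁, e₂ to 0, and ι : A → S_i(A) the inclusion. Then ι∘τ − Id = H∘∂′ + ∂′∘H on S_i(A); in particular ι∘τ is chain homotopic to the identity. (Equations (3.7)–(3.8) in the proof of Corollary 3.9 of the paper.) -/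

import Mathlib

/-! Both sides are `R`-linear, so it suffices to check the identity on monomials, by induction
on the word. The map `H` commutes up to sign with left multiplication by `A`, that is
`H (a x) = (−1)^{|a|} a · H x` for homogeneous `a ∈ A`, while `H (e₁ x) = 0` and
`H (e₂ x) = −e₁ x`. Expanding `D'` by the signed Leibniz rule, the identity therefore passes
from `x` to `v x` for a generator `v ∈ V` (the two terms `± D'v · H x` cancel because `D'v`
has degree `|v| − 1`), and it holds outright for `e₁ x` and `e₂ x`, where `ι τ` vanishes:
there the two terms `± e₁ · D'x` cancel because `|e₂| = |e₁| − 1`. -/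

/-- The degree of a monomial (a word in the generators), given a degree function `d`
on the generators: the sum of the degrees of its letters. -/
def monomialDegree {V : Type*} (d : V → ℤ) (w : FreeMonoid V) : ℤ :=
  (w.toList.map d).sum

/-- The homogeneous component of degree `n` of the free associative unital
`R`-algebra on `V` (realized as the monoid algebra on the free monoid on `V`),
graded so that a generator `v` has degree `d v`. -/
noncomputable def homogComponent (R : Type*) [CommRing R] {V : Type*} (d : V → ℤ) (n : ℤ) :
    Submodule R (MonoidAlgebra R (FreeMonoid V)) :=
  MonoidAlgebra.supported R R {w : FreeMonoid V | monomialDegree d w = n}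

/-- Split a word in the generators `V ⊕ Fin 2` at the first occurrence of one of the
two adjoined generators `e₁ = inr 0`, `e₂ = inr 1`: returns `none` if there is no
such occurrence, and otherwise the (unique) factorization `w = a · e_j · b` with `a`
a word in the old generators only. -/
def splitAtFirstSpecial {V : Type*} :
    List (V ⊕ Fin 2) → Option (List V × Fin 2 × List (V ⊕ Fin 2))
  | [] => none
  | (Sum.inl v) :: rest =>
      (splitAtFirstSpecial rest).map fun p => (v :: p.1, p.2)
  | (Sum.inr j) :: rest => some ([], j, rest)

/-- The value of the chain homotopy `H` on a monomial `w` of the stabilized algebra: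
`H w = 0` if `w` contains no `e₁, e₂`; `H (a e₁ b) = 0`; and
`H (a e₂ b) = (−1)^{|a|+1} a e₁ b`, where `a` contains no `e₁, e₂` and `|a|` is its
degree. -/
noncomputable def homotopyOnMonomial (R : Type*) [CommRing R] {V : Type*} (d : V → ℤ)
    (w : FreeMonoid (V ⊕ Fin 2)) : MonoidAlgebra R (FreeMonoid (V ⊕ Fin 2)) :=
  match splitAtFirstSpecial w.toList with
  | none => 0
  | some (a, j, b) =>
      if j = 1 then
        (Int.negOnePow ((a.map d).sum + 1) : ℤ) •
          MonoidAlgebra.single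
            (FreeMonoid.ofList (a.map (Sum.inl : V → V ⊕ Fin 2)
              ++ (Sum.inr 0 : V ⊕ Fin 2) :: b)) (1 : R)
      else 0

/-- The `R`-linear chain homotopy `H` on the stabilized algebra, extending
`homotopyOnMonomial` linearly from the monomial basis. -/
noncomputable def homotopyH (R : Type*) [CommRing R] {V : Type*} (d : V → ℤ) :
    MonoidAlgebra R (FreeMonoid (V ⊕ Fin 2)) →ₗ[R]
      MonoidAlgebra R (FreeMonoid (V ⊕ Fin 2)) :=
  Finsupp.lift (MonoidAlgebra R (FreeMonoid (V ⊕ Fin 2))) R (FreeMonoid (V ⊕ Fin 2))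
    (homotopyOnMonomial R d) ∘ₗ (MonoidAlgebra.coeffLinearEquiv R).toLinearMap

/-- The natural inclusion `ι : A → S_i(A)` of the free algebra on `V` into the free
algebra on `V ⊕ Fin 2`. -/
noncomputable def inclusionIota (R : Type*) [CommRing R] (V : Type*) :
    MonoidAlgebra R (FreeMonoid V) →ₐ[R] MonoidAlgebra R (FreeMonoid (V ⊕ Fin 2)) :=
  MonoidAlgebra.lift R _ (FreeMonoid V)
    (FreeMonoid.lift fun v =>
      MonoidAlgebra.single (FreeMonoid.of (Sum.inl v : V ⊕ Fin 2)) (1 : R))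

/-- The algebra projection `τ : S_i(A) → A` fixing the generators in `V` and sending
`e₁, e₂` to `0`. -/
noncomputable def projectionTau (R : Type*) [CommRing R] (V : Type*) :
    MonoidAlgebra R (FreeMonoid (V ⊕ Fin 2)) →ₐ[R] MonoidAlgebra R (FreeMonoid V) :=
  MonoidAlgebra.lift R _ (FreeMonoid (V ⊕ Fin 2))
    (FreeMonoid.lift (Sum.elim
      (fun v => MonoidAlgebra.single (FreeMonoid.of v) (1 : R))
      (fun _ => 0)))

open MonoidAlgebra

section

variable {R : Type*} [CommRing R] {V : Type*}

local notation "A" => MonoidAlgebra R (FreeMonoid V)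
local notation "S" => MonoidAlgebra R (FreeMonoid (V ⊕ Fin 2))
local notation "e₁" => MonoidAlgebra.single (FreeMonoid.of (Sum.inr 0 : V ⊕ Fin 2)) (1 : R)
local notation "e₂" => MonoidAlgebra.single (FreeMonoid.of (Sum.inr 1 : V ⊕ Fin 2)) (1 : R)

lemma monomialDegree_of (d : V → ℤ) (v : V) : monomialDegree d (FreeMonoid.of v) = d v := by
  simp [monomialDegree]

lemma monomialDegree_map_inl {d : V → ℤ} {d' : V ⊕ Fin 2 → ℤ}
    (hdd' : ∀ v, d' (Sum.inl v) = d v) (w : FreeMonoid V) :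
    monomialDegree d' (FreeMonoid.map Sum.inl w) = monomialDegree d w := by
  simp [monomialDegree, Function.comp_def, hdd']

lemma single_mem_homogComponent (d : V → ℤ) (w : FreeMonoid V) (r : R) :
    single w r ∈ homogComponent R d (monomialDegree d w) :=
  Finsupp.single_mem_supported R r rfl

lemma single_of_mem_homogComponent (d : V → ℤ) (v : V) :
    single (FreeMonoid.of v) (1 : R) ∈ homogComponent R d (d v) :=
  monomialDegree_of d v ▸ single_mem_homogComponent d _ 1

lemma splitAtFirstSpecial_map_inl_append (a : List V) (l : List (V ⊕ Fin 2)) :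
    splitAtFirstSpecial (a.map Sum.inl ++ l)
      = (splitAtFirstSpecial l).map fun p => (a ++ p.1, p.2) := by
  induction a with
  | nil => simp
  | cons v a ih => cases h : splitAtFirstSpecial l <;> simp [splitAtFirstSpecial, ih, h]

lemma inclusionIota_single (w : FreeMonoid V) (r : R) :
    inclusionIota R V (single w r) = single (FreeMonoid.map Sum.inl w) r := by
  have hw : FreeMonoid.lift (fun v => single (FreeMonoid.of (Sum.inl v : V ⊕ Fin 2)) (1 : R)) w
      = single (FreeMonoid.map Sum.inl w) 1 :=
    DFunLike.congr_fun (f := FreeMonoid.lift _) (g := (of R _).comp (FreeMonoid.map Sum.inl))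
      (FreeMonoid.hom_eq fun v => rfl) w
  rw [inclusionIota, lift_single, hw, smul_single', mul_one]

lemma inclusionIota_mem_homogComponent {d : V → ℤ} {d' : V ⊕ Fin 2 → ℤ}
    (hdd' : ∀ v, d' (Sum.inl v) = d v) {n : ℤ} {c : A}
    (hc : c ∈ homogComponent R d n) : inclusionIota R V c ∈ homogComponent R d' n := by
  rw [homogComponent, supported_eq_span_single] at hc
  induction hc using Submodule.span_induction with
  | mem c hc =>
    obtain ⟨w, rfl : monomialDegree d w = n, rfl⟩ := hc
    rw [inclusionIota_single, ← monomialDegree_map_inl hdd']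
    exact single_mem_homogComponent d' _ 1
  | zero => simp
  | add _ _ _ _ hc hc' => simpa using add_mem hc hc'
  | smul r _ _ hc => simpa using Submodule.smul_mem _ r hc

lemma projectionTau_comp_inclusionIota :
    (projectionTau R V).comp (inclusionIota R V) = AlgHom.id R _ := by
  refine algHom_ext' (FreeMonoid.hom_eq fun v => ?_) (Subsingleton.elim _ _)
  simp [projectionTau, inclusionIota]

lemma projectionTau_inclusionIota (c : A) :
    projectionTau R V (inclusionIota R V c) = c :=
  AlgHom.congr_fun projectionTau_comp_inclusionIota c

lemma projectionTau_single_inr (j : Fin 2) :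
    projectionTau R V (single (FreeMonoid.of (Sum.inr j)) 1) = 0 := by
  simp [projectionTau]

variable (d : V → ℤ)

lemma homotopyOnMonomial_map_inl_mul (w : FreeMonoid V) (g : FreeMonoid (V ⊕ Fin 2)) :
    homotopyOnMonomial R d (FreeMonoid.map Sum.inl w * g)
      = ((monomialDegree d w).negOnePow : ℤ) •
          (single (FreeMonoid.map Sum.inl w) (1 : R) * homotopyOnMonomial R d g) := by
  have hsplit := splitAtFirstSpecial_map_inl_append w.toList g.toList
  simp only [homotopyOnMonomial, FreeMonoid.toList_mul, FreeMonoid.toList_map, hsplit]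
  rcases splitAtFirstSpecial g.toList with _ | ⟨a, j, b⟩
  · simp
  · by_cases hj : j = 1
    · simp only [Option.map_some, hj, if_true, mul_smul_comm, smul_smul, single_mul_single,
        one_mul, ← Units.val_mul, ← Int.negOnePow_add, monomialDegree]
      congr 2
      · simp [add_assoc]
      · apply FreeMonoid.toList.injective
        simp
    · simp [hj]

lemma homotopyOnMonomial_map_inl (w : FreeMonoid V) :
    homotopyOnMonomial R d (FreeMonoid.map Sum.inl w) = 0 := by
  simpa [homotopyOnMonomial, splitAtFirstSpecial] using homotopyOnMonomial_map_inl_mul d w 1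

lemma homotopyOnMonomial_of_inr_zero_mul (g : FreeMonoid (V ⊕ Fin 2)) :
    homotopyOnMonomial R d (FreeMonoid.of (Sum.inr 0) * g) = 0 := by
  simp [homotopyOnMonomial, splitAtFirstSpecial]

lemma homotopyOnMonomial_of_inr_one_mul (g : FreeMonoid (V ⊕ Fin 2)) :
    homotopyOnMonomial R d (FreeMonoid.of (Sum.inr 1) * g)
      = -single (FreeMonoid.of (Sum.inr 0) * g) (1 : R) := by
  simp [homotopyOnMonomial, splitAtFirstSpecial]

lemma homotopyH_single (w : FreeMonoid (V ⊕ Fin 2)) (r : R) :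
    homotopyH R d (single w r) = r • homotopyOnMonomial R d w := by
  simp [homotopyH]

lemma homotopyH_mul_eq {y : S} {L : S →ₗ[R] S}
    (h : ∀ g, homotopyH R d (y * single g 1) = L (single g 1)) (x : S) :
    homotopyH R d (y * x) = L x := by
  suffices homotopyH R d ∘ₗ LinearMap.mulLeft R y = L from LinearMap.congr_fun this x
  exact lhom_ext' fun g => LinearMap.ext_ring (h g)

lemma homotopyH_inclusionIota (c : A) :
    homotopyH R d (inclusionIota R V c) = 0 := by
  induction c using induction_linear with
  | zero => simp
  | add x y hx hy => simp [hx, hy]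
  | single w r =>
    rw [inclusionIota_single, homotopyH_single, homotopyOnMonomial_map_inl, smul_zero]

lemma homotopyH_inclusionIota_single_mul (w : FreeMonoid V) (x : S) :
    homotopyH R d (inclusionIota R V (single w 1) * x)
      = ((monomialDegree d w).negOnePow : ℤ) •
          (inclusionIota R V (single w 1) * homotopyH R d x) :=
  homotopyH_mul_eq d (L := ((monomialDegree d w).negOnePow : ℤ) •
      (LinearMap.mulLeft R (inclusionIota R V (single w 1)) ∘ₗ homotopyH R d))
    (fun g => by
      simp only [LinearMap.smul_apply, LinearMap.comp_apply, LinearMap.mulLeft_apply,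
        inclusionIota_single, single_mul_single, one_mul, homotopyH_single, one_smul,
        homotopyOnMonomial_map_inl_mul]) x

lemma homotopyH_inclusionIota_mul {n : ℤ} {c : A}
    (hc : c ∈ homogComponent R d n) (x : S) :
    homotopyH R d (inclusionIota R V c * x)
      = (n.negOnePow : ℤ) • (inclusionIota R V c * homotopyH R d x) := by
  rw [homogComponent, supported_eq_span_single] at hc
  induction hc using Submodule.span_induction with
  | mem c hc =>
    obtain ⟨w, rfl : monomialDegree d w = n, rfl⟩ := hc
    exact homotopyH_inclusionIota_single_mul d w x
  | zero => simp
  | add c c' _ _ hc hc' => simp [add_mul, hc, hc']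
  | smul r c _ hc => simp [hc, smul_comm]

lemma homotopyH_e₁_mul (x : S) : homotopyH R d (e₁ * x) = 0 :=
  homotopyH_mul_eq d (L := 0) (fun g => by
    simp [single_mul_single, homotopyH_single, homotopyOnMonomial_of_inr_zero_mul]) x

lemma homotopyH_e₂_mul (x : S) : homotopyH R d (e₂ * x) = -(e₁ * x) :=
  homotopyH_mul_eq d (L := -LinearMap.mulLeft R e₁) (fun g => by
    simp [single_mul_single, homotopyH_single, homotopyOnMonomial_of_inr_one_mul]) x

def IsSignedLeibniz (D : A →ₗ[R] A) : Prop :=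
  ∀ n : ℤ, ∀ a ∈ homogComponent R d n, ∀ b,
    D (a * b) = D a * b + (Int.negOnePow n : ℤ) • (a * D b)

variable {d' : V ⊕ Fin 2 → ℤ}
  {D : MonoidAlgebra R (FreeMonoid V) →ₗ[R] MonoidAlgebra R (FreeMonoid V)}
  {D' : MonoidAlgebra R (FreeMonoid (V ⊕ Fin 2)) →ₗ[R]
    MonoidAlgebra R (FreeMonoid (V ⊕ Fin 2))}

theorem homotopy_identity_inclusionIota
    (hext : ∀ a, D' (inclusionIota R V a) = inclusionIota R V (D a)) (c : A) :
    inclusionIota R V (projectionTau R V (inclusionIota R V c)) - inclusionIota R V c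
      = homotopyH R d (D' (inclusionIota R V c)) + D' (homotopyH R d (inclusionIota R V c)) := by
  rw [projectionTau_inclusionIota, sub_self, hext, homotopyH_inclusionIota,
    homotopyH_inclusionIota, map_zero, add_zero]

theorem homotopy_identity_inclusionIota_mul (hdd' : ∀ v, d' (Sum.inl v) = d v)
    (hDdeg : ∀ n : ℤ, ∀ a ∈ homogComponent R d n, D a ∈ homogComponent R d (n - 1))
    (hD' : IsSignedLeibniz d' D')
    (hext : ∀ a, D' (inclusionIota R V a) = inclusionIota R V (D a)) {n : ℤ} {c : A}
    (hc : c ∈ homogComponent R d n) {x : S}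
    (hx : inclusionIota R V (projectionTau R V x) - x
      = homotopyH R d (D' x) + D' (homotopyH R d x)) :
    inclusionIota R V (projectionTau R V (inclusionIota R V c * x)) - inclusionIota R V c * x
      = homotopyH R d (D' (inclusionIota R V c * x))
          + D' (homotopyH R d (inclusionIota R V c * x)) := by
  have hg := inclusionIota_mem_homogComponent hdd' hc
  rw [map_mul, map_mul, projectionTau_inclusionIota, ← mul_sub, hx, hD' _ _ hg, hext, map_add,
    map_zsmul, homotopyH_inclusionIota_mul d (hDdeg _ _ hc), homotopyH_inclusionIota_mul d hc,
    homotopyH_inclusionIota_mul d hc, map_zsmul, hD' _ _ hg, hext, Int.negOnePow_sub,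
    Int.negOnePow_one]
  simp only [Units.val_neg, mul_neg, mul_one, neg_smul, smul_add, smul_smul,
    Int.units_coe_mul_self, one_smul, mul_add]
  abel

theorem homotopy_identity_e₁_mul (hD' : IsSignedLeibniz d' D') (he₁ : D' e₁ = e₂) (x : S) :
    inclusionIota R V (projectionTau R V (e₁ * x)) - e₁ * x
      = homotopyH R d (D' (e₁ * x)) + D' (homotopyH R d (e₁ * x)) := by
  rw [map_mul, projectionTau_single_inr, zero_mul, map_zero, zero_sub, homotopyH_e₁_mul, map_zero,
    add_zero, hD' _ _ (single_of_mem_homogComponent d' _) x, he₁, map_add, map_zsmul,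
    homotopyH_e₂_mul, homotopyH_e₁_mul, smul_zero, add_zero]

theorem homotopy_identity_e₂_mul (hdeg : d' (Sum.inr 1) = d' (Sum.inr 0) - 1)
    (hD' : IsSignedLeibniz d' D') (he₁ : D' e₁ = e₂) (he₂ : D' e₂ = 0) (x : S) :
    inclusionIota R V (projectionTau R V (e₂ * x)) - e₂ * x
      = homotopyH R d (D' (e₂ * x)) + D' (homotopyH R d (e₂ * x)) := by
  rw [map_mul, projectionTau_single_inr, zero_mul, map_zero, zero_sub,
    hD' _ _ (single_of_mem_homogComponent d' _) x, he₂, zero_mul, zero_add, map_zsmul,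
    homotopyH_e₂_mul, homotopyH_e₂_mul, map_neg, hD' _ _ (single_of_mem_homogComponent d' _) x,
    he₁, hdeg, Int.negOnePow_sub, Int.negOnePow_one]
  simp only [Units.val_neg, mul_neg, mul_one, neg_smul, smul_neg, neg_neg, neg_add]
  abel

theorem homotopy_identity_single (hdd' : ∀ v, d' (Sum.inl v) = d v)
    (hdeg : d' (Sum.inr 1) = d' (Sum.inr 0) - 1)
    (hDdeg : ∀ n : ℤ, ∀ a ∈ homogComponent R d n, D a ∈ homogComponent R d (n - 1))
    (hD' : IsSignedLeibniz d' D') (hext : ∀ a, D' (inclusionIota R V a) = inclusionIota R V (D a))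
    (he₁ : D' e₁ = e₂) (he₂ : D' e₂ = 0) (w : FreeMonoid (V ⊕ Fin 2)) :
    inclusionIota R V (projectionTau R V (single w 1)) - single w 1
      = homotopyH R d (D' (single w 1)) + D' (homotopyH R d (single w 1)) := by
  induction w using FreeMonoid.inductionOn' with
  | one => simpa [← one_def] using homotopy_identity_inclusionIota d hext 1
  | of_mul g w ih =>
    rw [← one_mul (1 : R), ← single_mul_single]
    rcases g with v | j
    · rw [show single (FreeMonoid.of (Sum.inl v)) (1 : R)
          = inclusionIota R V (single (FreeMonoid.of v) 1) by simp [inclusionIota_single]]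
      exact homotopy_identity_inclusionIota_mul d hdd' hDdeg hD' hext
        (single_of_mem_homogComponent d v) ih
    · fin_cases j
      · exact homotopy_identity_e₁_mul d hD' he₁ _
      · exact homotopy_identity_e₂_mul d hdeg hD' he₁ he₂ _

end

theorem iota_tau_chain_homotopic_id_general
    (R : Type*) [CommRing R] (V : Type*) (d : V → ℤ) (i : ℤ)
    (d' : V ⊕ Fin 2 → ℤ)
    (hd' : d' = Sum.elim d fun j => if j = 0 then i else i - 1)
    (D : MonoidAlgebra R (FreeMonoid V) →ₗ[R] MonoidAlgebra R (FreeMonoid V))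
    (D' : MonoidAlgebra R (FreeMonoid (V ⊕ Fin 2)) →ₗ[R]
      MonoidAlgebra R (FreeMonoid (V ⊕ Fin 2)))
    -- `D` is a degree `−1`, square-zero, signed-Leibniz differential annihilating `R`
    (hDdeg : ∀ n : ℤ, ∀ a ∈ homogComponent R d n, D a ∈ homogComponent R d (n - 1))
    -- `D'` is likewise a degree `−1`, square-zero, signed-Leibniz differential
    (hD'leib : ∀ n : ℤ, ∀ a ∈ homogComponent R d' n, ∀ b,
      D' (a * b) = D' a * b + (Int.negOnePow n : ℤ) • (a * D' b))
    -- `D'` extends `D` and satisfies `D' e₁ = e₂`, `D' e₂ = 0`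
    (hext : ∀ a, D' (inclusionIota R V a) = inclusionIota R V (D a))
    (he₁ : D' (MonoidAlgebra.single (FreeMonoid.of (Sum.inr 0 : V ⊕ Fin 2)) (1 : R))
      = MonoidAlgebra.single (FreeMonoid.of (Sum.inr 1 : V ⊕ Fin 2)) (1 : R))
    (he₂ : D' (MonoidAlgebra.single (FreeMonoid.of (Sum.inr 1 : V ⊕ Fin 2)) (1 : R))
      = 0) :
    ∀ a : MonoidAlgebra R (FreeMonoid (V ⊕ Fin 2)),
      inclusionIota R V (projectionTau R V a) - a
        = homotopyH R d (D' a) + D' (homotopyH R d a) := by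
  have hdd' : ∀ v, d' (Sum.inl v) = d v := by simp [hd']
  have hdeg : d' (Sum.inr 1) = d' (Sum.inr 0) - 1 := by simp [hd']
  suffices (inclusionIota R V).toLinearMap ∘ₗ (projectionTau R V).toLinearMap - LinearMap.id
      = homotopyH R d ∘ₗ D' + D' ∘ₗ homotopyH R d from LinearMap.congr_fun this
  refine lhom_ext' fun w => LinearMap.ext_ring ?_
  simpa using homotopy_identity_single d hdd' hdeg hDdeg hD'leib hext he₁ he₂ w

/-- **Equations (3.7)–(3.8) in the proof of Corollary 3.9**: for the stabilization
`S_i(A)` of a free DGA `(A, D)` (adjoining `e₁` of degree `i` and `e₂` of degree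
`i − 1`, with differential `D'` extending `D`, `D' e₁ = e₂`, `D' e₂ = 0`), the map
`H` defined on monomials by `H(w) = 0` for `w ∈ A`, `H(a e₁ b) = 0` and
`H(a e₂ b) = (−1)^{|a|+1} a e₁ b` satisfies `ι ∘ τ − Id = H ∘ D' + D' ∘ H`;
in particular `ι ∘ τ` is chain homotopic to the identity. -/
theorem iota_tau_chain_homotopic_id
    (R : Type*) [CommRing R] (V : Type*) (d : V → ℤ) (i : ℤ)
    (d' : V ⊕ Fin 2 → ℤ)
    (hd' : d' = Sum.elim d fun j => if j = 0 then i else i - 1)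
    (D : MonoidAlgebra R (FreeMonoid V) →ₗ[R] MonoidAlgebra R (FreeMonoid V))
    (D' : MonoidAlgebra R (FreeMonoid (V ⊕ Fin 2)) →ₗ[R]
      MonoidAlgebra R (FreeMonoid (V ⊕ Fin 2)))
    -- `D` is a degree `−1`, square-zero, signed-Leibniz differential annihilating `R`
    (hDdeg : ∀ n : ℤ, ∀ a ∈ homogComponent R d n, D a ∈ homogComponent R d (n - 1))
    (hDsq : ∀ a, D (D a) = 0)
    (hDann : ∀ r : R, D (algebraMap R (MonoidAlgebra R (FreeMonoid V)) r) = 0)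
    (hDleib : ∀ n : ℤ, ∀ a ∈ homogComponent R d n, ∀ b,
      D (a * b) = D a * b + (Int.negOnePow n : ℤ) • (a * D b))
    -- `D'` is likewise a degree `−1`, square-zero, signed-Leibniz differential
    (hD'deg : ∀ n : ℤ, ∀ a ∈ homogComponent R d' n, D' a ∈ homogComponent R d' (n - 1))
    (hD'sq : ∀ a, D' (D' a) = 0)
    (hD'ann : ∀ r : R,
      D' (algebraMap R (MonoidAlgebra R (FreeMonoid (V ⊕ Fin 2))) r) = 0)
    (hD'leib : ∀ n : ℤ, ∀ a ∈ homogComponent R d' n, ∀ b,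
      D' (a * b) = D' a * b + (Int.negOnePow n : ℤ) • (a * D' b))
    -- `D'` extends `D` and satisfies `D' e₁ = e₂`, `D' e₂ = 0`
    (hext : ∀ a, D' (inclusionIota R V a) = inclusionIota R V (D a))
    (he₁ : D' (MonoidAlgebra.single (FreeMonoid.of (Sum.inr 0 : V ⊕ Fin 2)) (1 : R))
      = MonoidAlgebra.single (FreeMonoid.of (Sum.inr 1 : V ⊕ Fin 2)) (1 : R))
    (he₂ : D' (MonoidAlgebra.single (FreeMonoid.of (Sum.inr 1 : V ⊕ Fin 2)) (1 : R))
      = 0) :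
    ∀ a : MonoidAlgebra R (FreeMonoid (V ⊕ Fin 2)),
      inclusionIota R V (projectionTau R V a) - a
        = homotopyH R d (D' a) + D' (homotopyH R d a) :=
  iota_tau_chain_homotopic_id_general R V d i d' hd' D D' hDdeg hD'leib hext he₁ he₂
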